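/- F satisfies the functional equation F(1/α, 1/β) = α · β · F(α, β) for all real α, β > 0 (as values in [0, ∞]). -/

import Mathlib

/-! On the unit circle `conj z = z⁻¹`, so `|z - r| = |r z - 1|` for real `r`; hence
`|r⁻¹ z - 1| = r⁻¹ |r z - 1|` and likewise `|r⁻¹ z + 1| = r⁻¹ |r z + 1|` for `r > 0`. The
integrand of `F(1/α, 1/β)` is therefore `α β` times that of `F(α, β)`, pointwise in `θ`. -/

open MeasureTheory Real

/-- `F(α, β) = ∫₀^{2π} (|α e^{iθ} − 1| · |β e^{iθ} + 1|)⁻¹ dθ`, as a value in `[0, ∞]`. -/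
noncomputable def Ffun (α β : ℝ) : ENNReal :=
  ∫⁻ θ in Set.Icc (0:ℝ) (2 * Real.pi),
    ENNReal.ofReal
      ((‖α * Complex.exp (Complex.I * θ) - 1‖ *
        ‖β * Complex.exp (Complex.I * θ) + 1‖)⁻¹)

open ComplexConjugate

namespace Complex

variable {z : ℂ}

theorem norm_sub_ofReal_eq_norm_ofReal_mul_sub_one (hz : ‖z‖ = 1) (r : ℝ) :
    ‖z - r‖ = ‖r * z - 1‖ := by
  have hz0 : z ≠ 0 := norm_ne_zero_iff.mp (hz ▸ one_ne_zero)
  calc ‖z - r‖ = ‖conj (z - r)‖ := (norm_conj _).symm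
    _ = ‖z⁻¹ * (1 - r * z)‖ := by
      rw [map_sub, conj_ofReal, ← inv_eq_conj hz]
      congr 1
      field_simp
    _ = ‖r * z - 1‖ := by rw [norm_mul, norm_inv, hz, inv_one, one_mul, norm_sub_rev]

theorem norm_ofReal_inv_mul_sub_one (hz : ‖z‖ = 1) {r : ℝ} (hr : r ≠ 0) :
    ‖((r⁻¹ : ℝ) : ℂ) * z - 1‖ = |r|⁻¹ * ‖r * z - 1‖ := by
  have : ((r⁻¹ : ℝ) : ℂ) * z - 1 = ((r⁻¹ : ℝ) : ℂ) * (z - r) := by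
    rw [mul_sub, ofReal_inv, inv_mul_cancel₀ (ofReal_ne_zero.mpr hr)]
  rw [this, norm_mul, norm_real, norm_inv, Real.norm_eq_abs,
    norm_sub_ofReal_eq_norm_ofReal_mul_sub_one hz]

theorem norm_ofReal_inv_mul_add_one (hz : ‖z‖ = 1) {r : ℝ} (hr : r ≠ 0) :
    ‖((r⁻¹ : ℝ) : ℂ) * z + 1‖ = |r|⁻¹ * ‖r * z + 1‖ := by
  have h := norm_ofReal_inv_mul_sub_one hz (neg_ne_zero.mpr hr)
  rwa [inv_neg, abs_neg, ofReal_neg, ofReal_neg, neg_mul, neg_mul, ← neg_add', norm_neg,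
    ← neg_add', norm_neg] at h

end Complex

theorem stmt7 (α β : ℝ) (hα : 0 < α) (hβ : 0 < β) :
    Ffun (1 / α) (1 / β) = ENNReal.ofReal (α * β) * Ffun α β := by
  unfold Ffun
  rw [← lintegral_const_mul' _ _ ENNReal.ofReal_ne_top]
  refine setLIntegral_congr_fun measurableSet_Icc fun θ _ => ?_
  have hθ := Complex.norm_exp_I_mul_ofReal θ
  rw [one_div, one_div, Complex.norm_ofReal_inv_mul_sub_one hθ hα.ne',
    Complex.norm_ofReal_inv_mul_add_one hθ hβ.ne', abs_of_pos hα, abs_of_pos hβ,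
    ← ENNReal.ofReal_mul (by positivity)]
  congr 1
  rw [mul_mul_mul_comm, mul_inv, mul_inv, inv_inv, inv_inv]
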